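/- The classical algorithm for Büchi games is correct: on input a finite game graph G and B ⊆ S, iterating (compute R = Attr1(B∩S',G'), Tr = S' \ R, W' = Attr2(Tr,G'), remove W' from the game) until Tr is empty, the union W of all removed sets equals W2(coBuchi(S\B)), and its complement S \ W equals W1(Buchi(B)). -/

import Mathlib

open Classical

universe u

structure GameGraph (S : Type u) where
  E : S → Set S
  S1 : Set S
  succ_nonempty : ∀ s, (E s).Nonempty

namespace GameGraph

variable {S : Type u} (G : GameGraph S)

/-- A (general, history-dependent) strategy: given a history and the current
state, choose a successor. -/
abbrev Strat := { f : List S → S → S // ∀ h s, f h s ∈ G.E s }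

open Classical in
/-- The pair (history so far, current state) after `n` steps of the play from
`s` where player 1 uses `σ` (at states of `S1`) and player 2 uses `π`. -/
noncomputable def playPair (σ π : List S → S → S) (s : S) : ℕ → List S × S
  | 0 => ([], s)
  | n+1 =>
      let p := playPair σ π s n
      (p.1 ++ [p.2], if p.2 ∈ G.S1 then σ p.1 p.2 else π p.1 p.2)

/-- The unique play `ω(s,σ,π)`. -/
noncomputable def play (σ π : List S → S → S) (s : S) (n : ℕ) : S :=
  (G.playPair σ π s n).2

/-- Lift a memoryless strategy to a general one. -/
def liftML (f : S → S) : List S → S → S := fun _ s => f s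

def Reach (T : Set S) : Set (ℕ → S) := { ω | ∃ k, ω k ∈ T }

def Safe (F : Set S) : Set (ℕ → S) := { ω | ∀ k, ω k ∈ F }

/-- States occurring infinitely often in a play. -/
def InfOcc (ω : ℕ → S) : Set S := { t | ∀ N, ∃ k, N ≤ k ∧ ω k = t }

def Buchi (B : Set S) : Set (ℕ → S) := { ω | (InfOcc ω ∩ B).Nonempty }

def coBuchi (C : Set S) : Set (ℕ → S) := { ω | InfOcc ω ⊆ C }

/-- Winning set of player 1 for objective `Φ`. -/
def W1 (Φ : Set (ℕ → S)) : Set S :=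
  { s | ∃ σ : G.Strat, ∀ π : G.Strat, (G.play σ.1 π.1 s) ∈ Φ }

/-- Winning set of player 2 for objective `Ψ`. -/
def W2 (Ψ : Set (ℕ → S)) : Set S :=
  { s | ∃ π : G.Strat, ∀ σ : G.Strat, (G.play σ.1 π.1 s) ∈ Ψ }

/-- `U` is closed for player 1: player-1 states of `U` have all successors in
`U`, player-2 states of `U` have some successor in `U`. -/
def Closed1 (U : Set S) : Prop :=
  (∀ s ∈ U ∩ G.S1, G.E s ⊆ U) ∧ (∀ s ∈ U \ G.S1, (G.E s ∩ U).Nonempty)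

/-- `U` is closed for player 2. -/
def Closed2 (U : Set S) : Prop :=
  (∀ s ∈ U \ G.S1, G.E s ⊆ U) ∧ (∀ s ∈ U ∩ G.S1, (G.E s ∩ U).Nonempty)

/-- The inductive attractor sequence for player 1. -/
def AttrSeq1 (U : Set S) : ℕ → Set S
  | 0 => U
  | n+1 => AttrSeq1 U n
      ∪ { s | s ∈ G.S1 ∧ (G.E s ∩ AttrSeq1 U n).Nonempty }
      ∪ { s | s ∉ G.S1 ∧ G.E s ⊆ AttrSeq1 U n }

/-- Player-1 attractor of `U`. -/
def Attr1 (U : Set S) : Set S := ⋃ n, G.AttrSeq1 U n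

/-- The inductive attractor sequence for player 2. -/
def AttrSeq2 (U : Set S) : ℕ → Set S
  | 0 => U
  | n+1 => AttrSeq2 U n
      ∪ { s | s ∉ G.S1 ∧ (G.E s ∩ AttrSeq2 U n).Nonempty }
      ∪ { s | s ∈ G.S1 ∧ G.E s ⊆ AttrSeq2 U n }

/-- Player-2 attractor of `U`. -/
def Attr2 (U : Set S) : Set S := ⋃ n, G.AttrSeq2 U n

/-- Player-1 attractor sequence computed inside the region `X`
(i.e. in the restricted game `G ↾ X`). -/
def AttrSeq1In (X U : Set S) : ℕ → Set S
  | 0 => U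
  | n+1 => AttrSeq1In X U n
      ∪ { s | s ∈ X ∧ s ∈ G.S1 ∧ (G.E s ∩ AttrSeq1In X U n).Nonempty }
      ∪ { s | s ∈ X ∧ s ∉ G.S1 ∧ G.E s ∩ X ⊆ AttrSeq1In X U n }

/-- Player-1 attractor of `U` inside the region `X`. -/
def Attr1In (X U : Set S) : Set S := ⋃ n, G.AttrSeq1In X U n

/-- Player-2 attractor sequence computed inside the region `X`. -/
def AttrSeq2In (X U : Set S) : ℕ → Set S
  | 0 => U
  | n+1 => AttrSeq2In X U n
      ∪ { s | s ∈ X ∧ s ∉ G.S1 ∧ (G.E s ∩ AttrSeq2In X U n).Nonempty }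
      ∪ { s | s ∈ X ∧ s ∈ G.S1 ∧ G.E s ∩ X ⊆ AttrSeq2In X U n }

/-- Player-2 attractor of `U` inside the region `X`. -/
def Attr2In (X U : Set S) : Set S := ⋃ n, G.AttrSeq2In X U n

end GameGraph

open GameGraph

/-- The decreasing sequence of state sets computed by the classical algorithm:
at each step remove the player-2 attractor (within the current subgame) of the
complement of the player-1 attractor of the current Büchi states. -/
noncomputable def classicalS {S : Type u} (G : GameGraph S) (B : Set S) :
    ℕ → Set S
  | 0 => Set.univ
  | n+1 =>
      let S' := classicalS G B n
      S' \ G.Attr2In S' (S' \ G.Attr1In S' (B ∩ S'))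

/-! On the limit `X` of the iteration nothing more can be removed, so `X` is player-2 closed and
lies inside the player-1 attractor of `B ∩ X` computed in `X`. Player 1 wins Büchi from `X`
by following the attractor ranks down to `B` and, from `B`, staying in `X`.

Every state outside `X` was removed at a unique stage (its layer), inside the player-2
attractor of that stage's trap, which avoids `B` and which player 1 can leave only by leaving
the current subgame. Player 2 lowers the attractor rank and, at rank 0, stays in the trap; player 1
can only keep the layer or escape to an earlier one. Hence the pair (layer, rank) never
increases lexicographically and strictly decreases at positive rank, so it stabilises with
rank 0, i.e. inside a trap, and `B` is visited only finitely often.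

The two winning sets are disjoint, which upgrades the inclusions to equalities. -/

open Filter Set

lemma frequently_eq_zero_of_lt_of_ne_zero {g : ℕ → ℕ}
    (h : ∀ k, g k ≠ 0 → g (k + 1) < g k) :
    ∃ᶠ k in atTop, g k = 0 := by
  refine frequently_atTop.2 fun a => ?_
  induction hga : g a using Nat.strong_induction_on generalizing a with
  | _ m ih =>
    by_cases h0 : g a = 0
    · exact ⟨a, le_rfl, h0⟩
    · obtain ⟨b, hab, hb⟩ := ih _ (hga ▸ h a h0) (a + 1) rfl
      exact ⟨b, a.le_succ.trans hab, hb⟩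

lemma eventually_of_succ_le_of_succ_lt {α : Type*} [PartialOrder α] [WellFoundedLT α]
    {f : ℕ → α} {p : ℕ → Prop} (hle : ∀ k, f (k + 1) ≤ f k)
    (hlt : ∀ k, ¬p k → f (k + 1) < f k) :
    ∀ᶠ k in atTop, p k := by
  obtain ⟨n, hn⟩ := WellFoundedLT.antitone_chain_condition (antitone_nat_of_succ_le hle)
  refine eventually_atTop.2 ⟨n, fun k hk => by_contra fun hpk => ?_⟩
  have := hlt k hpk
  rw [← hn k hk, ← hn (k + 1) (hk.trans k.le_succ)] at this
  exact this.false

namespace GameGraph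

variable {S : Type u}

lemma mem_infOcc_iff {ω : ℕ → S} {t : S} : t ∈ InfOcc ω ↔ ∃ᶠ k in atTop, ω k = t :=
  frequently_atTop.symm

lemma infOcc_inter_nonempty [Finite S] {ω : ℕ → S} {B : Set S}
    (h : ∃ᶠ k in atTop, ω k ∈ B) : (InfOcc ω ∩ B).Nonempty := by
  have h' : ∃ᶠ k in atTop, ∃ b : B, ω k = b := h.mono fun k hk => ⟨⟨ω k, hk⟩, rfl⟩
  obtain ⟨b, hb⟩ := frequently_exists.1 h'
  exact ⟨b, mem_infOcc_iff.2 hb, b.2⟩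

lemma infOcc_subset {ω : ℕ → S} {C : Set S} (h : ∀ᶠ k in atTop, ω k ∈ C) :
    InfOcc ω ⊆ C := by
  intro t ht
  obtain ⟨k, hkC, rfl⟩ := (h.and_frequently (mem_infOcc_iff.1 ht)).exists
  exact hkC

variable (G : GameGraph S)

lemma disjoint_W1_buchi_W2_coBuchi (B : Set S) :
    Disjoint (G.W1 (Buchi B)) (G.W2 (coBuchi Bᶜ)) := by
  refine Set.disjoint_left.2 fun s ⟨σ, hσ⟩ ⟨π, hπ⟩ => ?_
  obtain ⟨b, hbω, hbB⟩ := hσ π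
  exact hπ σ hbω hbB

lemma play_succ (σ π : List S → S → S) (s : S) (n : ℕ) :
    G.play σ π s (n + 1) = if G.play σ π s n ∈ G.S1
      then σ (G.playPair σ π s n).1 (G.play σ π s n)
      else π (G.playPair σ π s n).1 (G.play σ π s n) :=
  rfl

lemma subset_W1_of_forall_step {X : Set S} {Φ : Set (ℕ → S)} (R : S → S → Prop)
    (hR : ∀ s t, R s t → t ∈ X)
    (h1 : ∀ s ∈ X, s ∈ G.S1 → ∃ t ∈ G.E s, R s t)
    (h2 : ∀ s ∈ X, s ∉ G.S1 → ∀ t ∈ G.E s, R s t)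
    (hΦ : ∀ ω : ℕ → S, ω 0 ∈ X → (∀ k, R (ω k) (ω (k + 1))) → ω ∈ Φ) :
    X ⊆ G.W1 Φ := by
  have hf : ∀ s, ∃ t ∈ G.E s, s ∈ X → s ∈ G.S1 → R s t := fun s => by
    by_cases hs : s ∈ X ∧ s ∈ G.S1
    · obtain ⟨t, ht, hst⟩ := h1 s hs.1 hs.2
      exact ⟨t, ht, fun _ _ => hst⟩
    · obtain ⟨t, ht⟩ := G.succ_nonempty s
      exact ⟨t, ht, fun h h' => (hs ⟨h, h'⟩).elim⟩
  choose f hfE hfR using hf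
  intro s hs
  refine ⟨⟨liftML f, fun _ => hfE⟩, fun π => hΦ _ hs ?_⟩
  have step : ∀ k, G.play (liftML f) π.1 s k ∈ X →
      R (G.play (liftML f) π.1 s k) (G.play (liftML f) π.1 s (k + 1)) := by
    intro k hk
    rw [play_succ]
    split_ifs with h
    · exact hfR _ hk h
    · exact h2 _ hk h _ (π.2 _ _)
  have inX : ∀ k, G.play (liftML f) π.1 s k ∈ X := fun k => by
    induction k with
    | zero => exact hs
    | succ k ih => exact hR _ _ (step k ih)
  exact fun k => step k (inX k)

def swap : GameGraph S where
  E := G.E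
  S1 := G.S1ᶜ
  succ_nonempty := G.succ_nonempty

lemma play_swap (σ π : List S → S → S) (s : S) : G.swap.play σ π s = G.play π σ s := by
  suffices ∀ n, G.swap.playPair σ π s n = G.playPair π σ s n from funext fun n => by
    simp only [play, this]
  intro n
  induction n with
  | zero => rfl
  | succ n ih =>
    rw [playPair, playPair, ih]
    simp only [swap, Set.mem_compl_iff, ite_not]

lemma W1_swap (Ψ : Set (ℕ → S)) : G.swap.W1 Ψ = G.W2 Ψ := by
  ext s
  simp only [W1, W2, play_swap]
  rfl

lemma attrSeq2In_eq_swap (X U : Set S) : G.AttrSeq2In X U = G.swap.AttrSeq1In X U := by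
  funext n
  induction n with
  | zero => rfl
  | succ n ih =>
    ext s
    simp [AttrSeq2In, AttrSeq1In, ih, swap]

lemma attr2In_eq_swap (X U : Set S) : G.Attr2In X U = G.swap.Attr1In X U := by
  simp only [Attr2In, Attr1In, attrSeq2In_eq_swap]

section Attractor

variable {X U : Set S} {s t : S}

lemma attrSeq1In_mono (X U : Set S) : Monotone (G.AttrSeq1In X U) :=
  monotone_nat_of_le_succ fun _ _ hs => Or.inl (Or.inl hs)

lemma attrSeq1In_subset (hU : U ⊆ X) (n : ℕ) : G.AttrSeq1In X U n ⊆ X := by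
  induction n with
  | zero => exact hU
  | succ n ih => rintro s ((h | h) | h) <;> first | exact ih h | exact h.1

lemma attr1In_subset (hU : U ⊆ X) : G.Attr1In X U ⊆ X :=
  iUnion_subset (G.attrSeq1In_subset hU)

lemma subset_attr1In : U ⊆ G.Attr1In X U :=
  subset_iUnion (G.AttrSeq1In X U) 0

lemma exists_attr1In_eq_attrSeq1In [Finite S] (X U : Set S) :
    ∃ N, G.Attr1In X U = G.AttrSeq1In X U N := by
  obtain ⟨N, hN⟩ := WellFoundedGT.monotone_chain_condition ⟨_, G.attrSeq1In_mono X U⟩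
  refine ⟨N, (iUnion_subset fun m => ?_).antisymm (subset_iUnion _ N)⟩
  rcases le_total m N with h | h
  · exact G.attrSeq1In_mono X U h
  · exact (hN m h).ge

lemma mem_attr1In_of_mem_S1 (hsX : s ∈ X) (hs1 : s ∈ G.S1) (ht : t ∈ G.E s)
    (htA : t ∈ G.Attr1In X U) : s ∈ G.Attr1In X U := by
  obtain ⟨k, hk⟩ := mem_iUnion.1 htA
  exact mem_iUnion.2 ⟨k + 1, Or.inl (Or.inr ⟨hsX, hs1, t, ht, hk⟩)⟩

lemma mem_attr1In_of_notMem_S1 [Finite S] (hsX : s ∈ X) (hs1 : s ∉ G.S1)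
    (h : G.E s ∩ X ⊆ G.Attr1In X U) : s ∈ G.Attr1In X U := by
  obtain ⟨N, hN⟩ := G.exists_attr1In_eq_attrSeq1In X U
  rw [hN] at h
  exact mem_iUnion.2 ⟨N + 1, Or.inr ⟨hsX, hs1, h⟩⟩

lemma succ_mem_diff_attr1In (hs : s ∈ X \ G.Attr1In X U) (hs1 : s ∈ G.S1) (ht : t ∈ G.E s)
    (htX : t ∈ X) : t ∈ X \ G.Attr1In X U :=
  ⟨htX, fun htA => hs.2 (G.mem_attr1In_of_mem_S1 hs.1 hs1 ht htA)⟩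

lemma exists_succ_mem_diff_attr1In [Finite S] (hs : s ∈ X \ G.Attr1In X U) (hs1 : s ∉ G.S1) :
    ∃ t ∈ G.E s, t ∈ X \ G.Attr1In X U := by
  by_contra! h
  exact hs.2 (G.mem_attr1In_of_notMem_S1 hs.1 hs1 fun t ⟨ht, htX⟩ =>
    by_contra fun htA => h t ht ⟨htX, htA⟩)

lemma Closed2.diff_attr2In [Finite S] (hX : G.Closed2 X) : G.Closed2 (X \ G.Attr2In X U) := by
  rw [attr2In_eq_swap]
  constructor
  · rintro s ⟨hs, hs1⟩ t ht
    exact G.swap.succ_mem_diff_attr1In hs hs1 ht (hX.1 s ⟨hs.1, hs1⟩ ht)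
  · rintro s ⟨hs, hs1⟩
    obtain ⟨t, ht, htD⟩ := G.swap.exists_succ_mem_diff_attr1In hs (not_not_intro hs1)
    exact ⟨t, ht, htD⟩

noncomputable def attrRank1In (X U : Set S) (s : S) : ℕ := sInf {k | s ∈ G.AttrSeq1In X U k}

lemma attrRank1In_le {k : ℕ} (hs : s ∈ G.AttrSeq1In X U k) : G.attrRank1In X U s ≤ k :=
  Nat.sInf_le hs

lemma attrRank1In_eq_zero (hs : s ∈ U) : G.attrRank1In X U s = 0 :=
  Nat.le_zero.1 (G.attrRank1In_le (k := 0) hs)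

lemma mem_attrSeq1In_attrRank1In (hs : s ∈ G.Attr1In X U) :
    s ∈ G.AttrSeq1In X U (G.attrRank1In X U s) :=
  Nat.sInf_mem (mem_iUnion.1 hs)

lemma mem_of_attrRank1In_eq_zero (hs : s ∈ G.Attr1In X U) (h : G.attrRank1In X U s = 0) :
    s ∈ U := by
  have hs0 := G.mem_attrSeq1In_attrRank1In hs
  rwa [h] at hs0

lemma attrRank1In_eq_succ {k : ℕ} (hs : s ∈ G.Attr1In X U) (h : G.attrRank1In X U s = k + 1) :
    (s ∈ G.S1 ∧ ∃ t ∈ G.E s, t ∈ G.AttrSeq1In X U k) ∨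
      (s ∉ G.S1 ∧ G.E s ∩ X ⊆ G.AttrSeq1In X U k) := by
  have hmem := G.mem_attrSeq1In_attrRank1In hs
  rw [h] at hmem
  rcases hmem with (hk | ⟨-, h1, ht⟩) | ⟨-, h1, ht⟩
  · exact absurd (G.attrRank1In_le hk) (by omega)
  · exact Or.inl ⟨h1, ht⟩
  · exact Or.inr ⟨h1, ht⟩

lemma exists_succ_attrRank1In_lt (hs : s ∈ G.Attr1In X U) (hs1 : s ∈ G.S1)
    (h0 : G.attrRank1In X U s ≠ 0) :
    ∃ t ∈ G.E s, t ∈ G.Attr1In X U ∧ G.attrRank1In X U t < G.attrRank1In X U s := by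
  obtain ⟨k, hk⟩ := Nat.exists_eq_succ_of_ne_zero h0
  rcases G.attrRank1In_eq_succ hs hk with ⟨-, t, ht, htk⟩ | ⟨hs1', -⟩
  · exact ⟨t, ht, mem_iUnion.2 ⟨k, htk⟩, hk ▸ Nat.lt_succ_of_le (G.attrRank1In_le htk)⟩
  · exact absurd hs1 hs1'

lemma attrRank1In_lt_of_notMem_S1 (hs : s ∈ G.Attr1In X U) (hs1 : s ∉ G.S1)
    (h0 : G.attrRank1In X U s ≠ 0) (ht : t ∈ G.E s) (htX : t ∈ X) :
    t ∈ G.Attr1In X U ∧ G.attrRank1In X U t < G.attrRank1In X U s := by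
  obtain ⟨k, hk⟩ := Nat.exists_eq_succ_of_ne_zero h0
  rcases G.attrRank1In_eq_succ hs hk with ⟨hs1', -⟩ | ⟨-, hsub⟩
  · exact absurd hs1' hs1
  · have htk := hsub ⟨ht, htX⟩
    exact ⟨mem_iUnion.2 ⟨k, htk⟩, hk ▸ Nat.lt_succ_of_le (G.attrRank1In_le htk)⟩

end Attractor

theorem subset_W1_buchi [Finite S] {X B : Set S} (hX : G.Closed2 X)
    (hXA : X ⊆ G.Attr1In X (B ∩ X)) : X ⊆ G.W1 (Buchi B) := by
  set r := G.attrRank1In X (B ∩ X)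
  refine G.subset_W1_of_forall_step (fun s t => t ∈ X ∧ (r s ≠ 0 → r t < r s))
    (fun _ _ h => h.1) ?_ ?_ ?_
  · intro s hs hs1
    by_cases h0 : r s = 0
    · obtain ⟨t, ht, htX⟩ := hX.2 s ⟨hs, hs1⟩
      exact ⟨t, ht, htX, absurd h0⟩
    · obtain ⟨t, ht, htA, hlt⟩ := G.exists_succ_attrRank1In_lt (hXA hs) hs1 h0
      exact ⟨t, ht, G.attr1In_subset inter_subset_right htA, fun _ => hlt⟩
  · intro s hs hs1 t ht
    have htX := hX.1 s ⟨hs, hs1⟩ ht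
    exact ⟨htX, fun h0 => (G.attrRank1In_lt_of_notMem_S1 (hXA hs) hs1 h0 ht htX).2⟩
  · intro ω hω0 hω
    have hωX : ∀ k, ω k ∈ X := fun k => by
      cases k
      exacts [hω0, (hω _).1]
    refine infOcc_inter_nonempty ((frequently_eq_zero_of_lt_of_ne_zero fun k => (hω k).2).mono
      fun k hk => ?_)
    exact (G.mem_of_attrRank1In_eq_zero (hXA (hωX k)) hk).1

end GameGraph

section ClassicalAlgorithm

variable {S : Type u} (G : GameGraph S) (B : Set S)

noncomputable def classicalTrap (n : ℕ) : Set S :=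
  classicalS G B n \ G.Attr1In (classicalS G B n) (B ∩ classicalS G B n)

noncomputable def classicalRemoved (n : ℕ) : Set S :=
  G.swap.Attr1In (classicalS G B n) (classicalTrap G B n)

lemma classicalS_succ (n : ℕ) :
    classicalS G B (n + 1) = classicalS G B n \ classicalRemoved G B n := by
  rw [classicalRemoved, ← attr2In_eq_swap]
  rfl

lemma classicalS_antitone : Antitone (classicalS G B) :=
  antitone_nat_of_succ_le fun n => (classicalS_succ G B n).trans_subset sdiff_subset

lemma closed2_classicalS [Finite S] (n : ℕ) : G.Closed2 (classicalS G B n) := by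
  induction n with
  | zero =>
    exact ⟨fun _ _ _ _ => trivial,
      fun s _ => (G.succ_nonempty s).mono fun _ h => ⟨h, trivial⟩⟩
  | succ n ih => exact ih.diff_attr2In

lemma notMem_of_mem_classicalTrap {n : ℕ} {s : S} (hs : s ∈ classicalTrap G B n) : s ∉ B :=
  fun hB => hs.2 (G.subset_attr1In ⟨hB, hs.1⟩)

noncomputable def classicalLayer (s : S) : ℕ := sInf {n | s ∉ classicalS G B (n + 1)}

lemma classicalLayer_lt {n : ℕ} {s : S} (hs : s ∉ classicalS G B n) :
    classicalLayer G B s < n := by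
  cases n with
  | zero => exact absurd trivial hs
  | succ m => exact Nat.lt_succ_of_le (Nat.sInf_le hs)

lemma notMem_classicalS_succ_classicalLayer {n : ℕ} {s : S} (hs : s ∉ classicalS G B (n + 1)) :
    s ∉ classicalS G B (classicalLayer G B s + 1) :=
  Nat.sInf_mem (s := {n | s ∉ classicalS G B (n + 1)}) ⟨n, hs⟩

lemma classicalLayer_eq {n : ℕ} {s : S} (hs : s ∈ classicalRemoved G B n) :
    classicalLayer G B s = n := by
  have hsS : s ∈ classicalS G B n := G.swap.attr1In_subset sdiff_subset hs
  have hs1 : s ∉ classicalS G B (n + 1) := fun h => ((classicalS_succ G B n ▸ h).2 hs)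
  refine le_antisymm (Nat.sInf_le hs1) (not_lt.1 fun hlt => ?_)
  exact notMem_classicalS_succ_classicalLayer G B hs1 (classicalS_antitone G B hlt hsS)

lemma mem_classicalRemoved_classicalLayer {s : S} (hs : s ∉ ⋂ n, classicalS G B n) :
    s ∈ classicalRemoved G B (classicalLayer G B s) := by
  obtain ⟨n, hn⟩ := not_forall.1 (mt mem_iInter.2 hs)
  have hL := notMem_classicalS_succ_classicalLayer G B
    fun h => hn (classicalS_antitone G B n.le_succ h)
  have hsL : s ∈ classicalS G B (classicalLayer G B s) :=
    by_contra fun h => (classicalLayer_lt G B h).false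
  rw [classicalS_succ] at hL
  exact by_contra fun hR => hL ⟨hsL, hR⟩

noncomputable def classicalRankAt (n : ℕ) (s : S) : ℕ :=
  G.swap.attrRank1In (classicalS G B n) (classicalTrap G B n) s

noncomputable def classicalRank (s : S) : ℕ := classicalRankAt G B (classicalLayer G B s) s

noncomputable def classicalMeasure (s : S) : ℕ ×ₗ ℕ :=
  toLex (classicalLayer G B s, classicalRank G B s)

def ClassicalStep (s t : S) : Prop :=
  t ∉ (⋂ n, classicalS G B n) ∧ classicalMeasure G B t ≤ classicalMeasure G B s ∧
    (classicalRank G B s ≠ 0 → classicalMeasure G B t < classicalMeasure G B s)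

variable {G B} {s t : S}

lemma classicalStep_of_notMem (ht : t ∉ classicalS G B (classicalLayer G B s)) :
    ClassicalStep G B s t := by
  have hlt : classicalMeasure G B t < classicalMeasure G B s :=
    Prod.Lex.toLex_lt_toLex.2 (Or.inl (classicalLayer_lt G B ht))
  exact ⟨fun h => ht (mem_iInter.1 h _), hlt.le, fun _ => hlt⟩

lemma classicalStep_of_mem_removed (ht : t ∈ classicalRemoved G B (classicalLayer G B s))
    (hle : classicalRankAt G B (classicalLayer G B s) t ≤ classicalRank G B s)
    (hlt : classicalRank G B s ≠ 0 →
      classicalRankAt G B (classicalLayer G B s) t < classicalRank G B s) :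
    ClassicalStep G B s t := by
  have hL := classicalLayer_eq G B ht
  have hX : t ∉ ⋂ n, classicalS G B n := fun h =>
    (classicalS_succ G B _ ▸ mem_iInter.1 h (classicalLayer G B s + 1)).2 ht
  simp only [ClassicalStep, classicalMeasure, classicalRank, hL, Prod.Lex.toLex_le_toLex,
    Prod.Lex.toLex_lt_toLex, lt_self_iff_false, true_and, false_or]
  exact ⟨hX, hle, hlt⟩

lemma exists_classicalStep [Finite S] (hs : s ∉ ⋂ n, classicalS G B n) (hs1 : s ∉ G.S1) :
    ∃ t ∈ G.E s, ClassicalStep G B s t := by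
  have hsR := mem_classicalRemoved_classicalLayer G B hs
  by_cases h0 : classicalRank G B s = 0
  · have hsT := G.swap.mem_of_attrRank1In_eq_zero hsR h0
    obtain ⟨t, ht, htT⟩ := G.exists_succ_mem_diff_attr1In hsT hs1
    refine ⟨t, ht, classicalStep_of_mem_removed (G.swap.subset_attr1In htT) ?_ (absurd h0)⟩
    exact (G.swap.attrRank1In_eq_zero htT).trans_le (Nat.zero_le _)
  · obtain ⟨t, ht, htR, hlt⟩ := G.swap.exists_succ_attrRank1In_lt hsR hs1 h0
    exact ⟨t, ht, classicalStep_of_mem_removed htR hlt.le fun _ => hlt⟩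

lemma classicalStep_of_mem_S1 (hs : s ∉ ⋂ n, classicalS G B n) (hs1 : s ∈ G.S1)
    (ht : t ∈ G.E s) : ClassicalStep G B s t := by
  have hsR := mem_classicalRemoved_classicalLayer G B hs
  by_cases htS : t ∈ classicalS G B (classicalLayer G B s)
  · by_cases h0 : classicalRank G B s = 0
    · have hsT := G.swap.mem_of_attrRank1In_eq_zero hsR h0
      have htT := G.succ_mem_diff_attr1In hsT hs1 ht htS
      refine classicalStep_of_mem_removed (G.swap.subset_attr1In htT) ?_ (absurd h0)
      exact (G.swap.attrRank1In_eq_zero htT).trans_le (Nat.zero_le _)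
    · obtain ⟨htR, hlt⟩ :=
        G.swap.attrRank1In_lt_of_notMem_S1 hsR (not_not_intro hs1) h0 ht htS
      exact classicalStep_of_mem_removed htR hlt.le fun _ => hlt
  · exact classicalStep_of_notMem htS

variable (G B)

theorem iInter_classicalS_subset_W1 [Finite S] : (⋂ n, classicalS G B n) ⊆ G.W1 (Buchi B) := by
  obtain ⟨N, hN⟩ := WellFoundedLT.antitone_chain_condition (classicalS_antitone G B)
  have hX : ⋂ n, classicalS G B n = classicalS G B N :=
    (iInter_subset _ N).antisymm (subset_iInter fun m =>
      (le_total m N).elim (classicalS_antitone G B ·) fun h => (hN m h).le)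
  rw [hX]
  refine G.subset_W1_buchi (closed2_classicalS G B N) fun s hs => by_contra fun hsA => ?_
  have hs' : s ∈ classicalS G B (N + 1) := hN (N + 1) N.le_succ ▸ hs
  rw [classicalS_succ] at hs'
  exact hs'.2 (G.swap.subset_attr1In ⟨hs, hsA⟩)

theorem compl_iInter_classicalS_subset_W2 [Finite S] :
    (⋂ n, classicalS G B n)ᶜ ⊆ G.W2 (coBuchi Bᶜ) := by
  rw [← W1_swap]
  refine G.swap.subset_W1_of_forall_step (ClassicalStep G B) (fun _ _ h => h.1)
    (fun _ hs hs1 => exists_classicalStep hs hs1)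
    (fun _ hs hs1 _ ht => classicalStep_of_mem_S1 hs (not_not.1 hs1) ht) ?_
  intro ω hω0 hω
  have hωX : ∀ k, ω k ∉ ⋂ n, classicalS G B n := fun k => by
    cases k
    exacts [hω0, (hω _).1]
  have hρ : ∀ᶠ k in atTop, classicalRank G B (ω k) = 0 :=
    eventually_of_succ_le_of_succ_lt (f := fun k => classicalMeasure G B (ω k))
      (fun k => (hω k).2.1) (fun k => (hω k).2.2)
  refine infOcc_subset (hρ.mono fun k hk => ?_)
  exact notMem_of_mem_classicalTrap G B
    (G.swap.mem_of_attrRank1In_eq_zero (mem_classicalRemoved_classicalLayer G B (hωX k)) hk)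

end ClassicalAlgorithm

/-- correctness of the classical algorithm for Büchi games: the
limit of the iteration is `W1(Buchi B)` and the union of all removed sets is
`W2(coBuchi (S \ B))`. -/
theorem classical_correct {S : Type u} [Finite S] (G : GameGraph S)
    (B : Set S) :
    (⋂ n, classicalS G B n) = G.W1 (Buchi B) ∧
    (⋂ n, classicalS G B n)ᶜ = G.W2 (coBuchi Bᶜ) := by
  have hW1 := iInter_classicalS_subset_W1 G B
  have hW2 := compl_iInter_classicalS_subset_W2 G B
  have hdisj := Set.disjoint_left.1 (G.disjoint_W1_buchi_W2_coBuchi B)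
  exact ⟨hW1.antisymm fun s hs => by_contra fun hX => hdisj hs (hW2 hX),
    hW2.antisymm fun s hs hX => hdisj (hW1 hX) hs⟩
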